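/- arXiv:1510.03416 — 2 statements merged into one kernel-verified Lean document; each statement's English description precedes it below -/
import Mathlib

section
/- With Ξ_ρ(s) = ∫₀^∞ t^(s/2-1) Ψ(t) e^{-ρ log²(t)} dt for ρ > 0, the difference Ξ_ρ(s) - Ξ_ρ(1-s) vanishes if and only if s ∈ 1/2 + 16ρπi·ℤ, i.e. s = 1/2 + 16ρπi·k for some integer k. -/
/-
Write θ(t) = ∑_{n ∈ ℤ} e^{-πn²t} = 1 + 2Ψ(t) (Mathlib's `evenKernel 0`). Substituting t = eˣ turns
Ξ_ρ(s) into ∫_ℝ e^{sx/2 - ρx²} Ψ(eˣ) dx. The theta transformation formula θ(e^{-x}) = e^{x/2} θ(eˣ)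
expresses Ψ(e^{-x}) through Ψ(eˣ), so after x ↦ -x the integral for Ξ_ρ(1 - s) becomes the one for
Ξ_ρ(s) plus half a difference of two Gaussian integrals:
Ξ_ρ(s) - Ξ_ρ(1 - s) = ½ √(π/ρ) (e^{(s-1)²/(16ρ)} - e^{s²/(16ρ)}).
This vanishes iff (s - 1)² - s² = 1 - 2s lies in 16ρ · 2πi ℤ.
-/

open MeasureTheory Real Filter

noncomputable def Psi (t : ℝ) : ℝ := ∑' n : ℕ, Real.exp (-Real.pi * ((n : ℝ) + 1) ^ 2 * t)

noncomputable def Xi (ρ : ℝ) (s : ℂ) : ℂ :=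
  ∫ t in Set.Ioi (0:ℝ), (t : ℂ) ^ (s / 2 - 1) * (Psi t : ℂ) * (Real.exp (-ρ * Real.log t ^ 2) : ℂ)

open Complex HurwitzZeta

theorem hasSum_Psi {t : ℝ} (ht : 0 < t) :
    HasSum (fun n : ℕ => rexp (-π * ((n : ℝ) + 1) ^ 2 * t)) ((evenKernel 0 t - 1) / 2) := by
  rw [evenKernel_eq_cosKernel_of_zero]
  simpa using (hasSum_nat_cosKernel₀ 0 ht).div_const 2

theorem Psi_eq_evenKernel {t : ℝ} (ht : 0 < t) : Psi t = (evenKernel 0 t - 1) / 2 :=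
  (hasSum_Psi ht).tsum_eq

theorem Psi_nonneg (t : ℝ) : 0 ≤ Psi t := tsum_nonneg fun _ => (exp_pos _).le

theorem Psi_antitoneOn : AntitoneOn Psi (Set.Ioi 0) := fun t ht u _ htu => by
  rw [Psi_eq_evenKernel ht, Psi_eq_evenKernel (ht.out.trans_le htu)]
  refine hasSum_le (fun n => ?_) (hasSum_Psi (ht.out.trans_le htu)) (hasSum_Psi ht)
  exact exp_le_exp.2 <| mul_le_mul_of_nonpos_left htu <|
    mul_nonpos_of_nonpos_of_nonneg (neg_nonpos.2 pi_pos.le) (sq_nonneg _)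

theorem evenKernel_zero_exp_neg (x : ℝ) :
    evenKernel 0 (rexp (-x)) = rexp (x / 2) * evenKernel 0 (rexp x) := by
  rw [evenKernel_functional_equation, ← evenKernel_eq_cosKernel_of_zero, ← exp_mul]
  simp only [one_div, ← Real.exp_neg, neg_neg]
  ring_nf

theorem Psi_exp_neg (x : ℝ) :
    Psi (rexp (-x)) = rexp (x / 2) * Psi (rexp x) + (rexp (x / 2) - 1) / 2 := by
  rw [Psi_eq_evenKernel (exp_pos _), Psi_eq_evenKernel (exp_pos _), evenKernel_zero_exp_neg]
  ring

theorem continuous_Psi_exp : Continuous fun x => Psi (rexp x) := by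
  simp_rw [Psi_eq_evenKernel (exp_pos _)]
  have := (continuousOn_evenKernel 0).comp_continuous continuous_exp exp_pos
  fun_prop

theorem Psi_exp_le (x : ℝ) : Psi (rexp x) ≤ (Psi 1 + 1) * (1 + rexp (-x / 2)) := by
  have h1 : ∀ {t}, 1 ≤ t → Psi t ≤ Psi 1 := fun ht =>
    Psi_antitoneOn (Set.mem_Ioi.2 one_pos) (Set.mem_Ioi.2 (one_pos.trans_le ht)) ht
  have hP := Psi_nonneg 1
  have hE := Real.exp_pos (-x / 2)
  rcases le_or_gt 0 x with hx | hx
  · nlinarith [h1 (one_le_exp hx)]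
  · have hfe := Psi_exp_neg (-x)
    have h := h1 (one_le_exp (neg_nonneg.2 hx.le))
    rw [neg_neg] at hfe
    nlinarith [mul_le_mul_of_nonneg_left h hE.le, Psi_nonneg (rexp (-x))]

theorem integral_Ioi_zero_eq_integral_exp_smul {E : Type*} [NormedAddCommGroup E]
    [NormedSpace ℝ E] (g : ℝ → E) :
    ∫ t in Set.Ioi 0, g t = ∫ x, rexp x • g (rexp x) := by
  rw [← Real.range_exp, ← Set.image_univ, integral_image_eq_integral_abs_deriv_smul
    MeasurableSet.univ (fun x _ => (Real.hasDerivAt_exp x).hasDerivWithinAt)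
    Real.exp_injective.injOn, setIntegral_univ]
  simp_rw [abs_of_pos (Real.exp_pos _)]

theorem Xi_eq_integral (ρ : ℝ) (s : ℂ) :
    Xi ρ s = ∫ x : ℝ, cexp (s / 2 * x - ρ * x ^ 2) * Psi (rexp x) := by
  rw [Xi, integral_Ioi_zero_eq_integral_exp_smul]
  congr 1 with x
  have hx : ((rexp x : ℝ) : ℂ) ≠ 0 := ofReal_ne_zero.2 (exp_pos x).ne'
  have hexp : cexp (s / 2 * x - ρ * x ^ 2) =
      cexp x * cexp (x * (s / 2 - 1)) * cexp ↑(-ρ * x ^ 2) := by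
    rw [← Complex.exp_add, ← Complex.exp_add]
    push_cast
    ring_nf
  rw [Real.log_exp, real_smul, cpow_def_of_ne_zero hx, ← ofReal_log (exp_pos x).le, Real.log_exp,
    ofReal_exp, ofReal_exp, hexp]
  ring

theorem cexp_mul_sub_mul_sq_mul_Psi_exp_neg {b : ℂ} (w : ℂ) (x : ℝ) :
    cexp (w * x - b * x ^ 2) * Psi (rexp (-x)) = cexp ((w + 1 / 2) * x - b * x ^ 2) * Psi (rexp x)
      + (cexp ((w + 1 / 2) * x - b * x ^ 2) - cexp (w * x - b * x ^ 2)) / 2 := by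
  have hshift : cexp ((w + 1 / 2) * x - b * x ^ 2) = cexp (w * x - b * x ^ 2) * rexp (x / 2) := by
    rw [ofReal_exp, ← Complex.exp_add]
    push_cast
    ring_nf
  rw [Psi_exp_neg, hshift]
  push_cast
  ring

section

variable {b : ℂ} (hb : 0 < b.re) (w : ℂ)
include hb

theorem integrable_cexp_mul_sub_mul_sq :
    Integrable fun x : ℝ => cexp (w * x - b * x ^ 2) := by
  simpa [sub_eq_neg_add, neg_mul] using integrable_cexp_quadratic hb w 0

theorem integral_cexp_mul_sub_mul_sq :
    ∫ x : ℝ, cexp (w * x - b * x ^ 2) = (π / b) ^ (1 / 2 : ℂ) * cexp (w ^ 2 / (4 * b)) := by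
  simpa [sub_eq_neg_add, div_neg] using integral_cexp_quadratic (b := -b) (by simpa using hb) w 0

theorem integrable_cexp_mul_sub_mul_sq_mul_Psi_exp :
    Integrable fun x : ℝ => cexp (w * x - b * x ^ 2) * Psi (rexp x) := by
  have hmeas : AEStronglyMeasurable (fun x : ℝ => cexp (w * x - b * x ^ 2) * Psi (rexp x)) :=
    ((by fun_prop : Continuous fun x : ℝ => cexp (w * x - b * x ^ 2)).mul
      (continuous_ofReal.comp continuous_Psi_exp)).aestronglyMeasurable
  refine Integrable.mono' (((integrable_cexp_mul_sub_mul_sq hb w).norm.add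
    (integrable_cexp_mul_sub_mul_sq hb (w - 1 / 2)).norm).const_mul (Psi 1 + 1)) hmeas
    (.of_forall fun x => ?_)
  have hshift : cexp ((w - 1 / 2) * x - b * x ^ 2) = cexp (w * x - b * x ^ 2) * rexp (-x / 2) := by
    rw [ofReal_exp, ← Complex.exp_add]
    push_cast
    ring_nf
  rw [Pi.add_apply, norm_mul, norm_real, norm_of_nonneg (Psi_nonneg _), hshift, norm_mul, norm_real,
    norm_of_nonneg (exp_pos _).le]
  calc ‖cexp (w * x - b * x ^ 2)‖ * Psi (rexp x)
      ≤ ‖cexp (w * x - b * x ^ 2)‖ * ((Psi 1 + 1) * (1 + rexp (-x / 2))) :=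
        mul_le_mul_of_nonneg_left (Psi_exp_le x) (norm_nonneg _)
    _ = _ := by ring

theorem integral_cexp_mul_sub_mul_sq_mul_Psi_exp_neg :
    ∫ x : ℝ, cexp (w * x - b * x ^ 2) * Psi (rexp (-x)) =
      (∫ x : ℝ, cexp ((w + 1 / 2) * x - b * x ^ 2) * Psi (rexp x)) + (π / b) ^ (1 / 2 : ℂ) *
        (cexp ((w + 1 / 2) ^ 2 / (4 * b)) - cexp (w ^ 2 / (4 * b))) / 2 := by
  have hdiff : Integrable fun x : ℝ =>
      (cexp ((w + 1 / 2) * x - b * x ^ 2) - cexp (w * x - b * x ^ 2)) / 2 :=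
    ((integrable_cexp_mul_sub_mul_sq hb _).sub (integrable_cexp_mul_sub_mul_sq hb _)).div_const 2
  simp_rw [cexp_mul_sub_mul_sq_mul_Psi_exp_neg]
  rw [integral_add (integrable_cexp_mul_sub_mul_sq_mul_Psi_exp hb _) hdiff, integral_div,
    integral_sub (integrable_cexp_mul_sub_mul_sq hb _) (integrable_cexp_mul_sub_mul_sq hb _),
    integral_cexp_mul_sub_mul_sq hb, integral_cexp_mul_sub_mul_sq hb, mul_sub]

end

theorem Xi_sub_Xi_one_sub {ρ : ℝ} (hρ : 0 < ρ) (s : ℂ) :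
    Xi ρ s - Xi ρ (1 - s) =
      (π / ρ) ^ (1 / 2 : ℂ) * (cexp ((s - 1) ^ 2 / (16 * ρ)) - cexp (s ^ 2 / (16 * ρ))) / 2 := by
  have hb : 0 < (ρ : ℂ).re := by simpa using hρ
  have hflip : Xi ρ (1 - s) = ∫ x : ℝ, cexp ((s - 1) / 2 * x - ρ * x ^ 2) * Psi (rexp (-x)) := by
    rw [Xi_eq_integral, ← integral_neg_eq_self]
    congr 1 with x
    push_cast
    ring_nf
  rw [hflip, integral_cexp_mul_sub_mul_sq_mul_Psi_exp_neg hb, Xi_eq_integral,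
    show (s - 1) / 2 + 1 / 2 = s / 2 by ring, show (s / 2) ^ 2 / (4 * ρ) = s ^ 2 / (16 * ρ) by ring,
    show ((s - 1) / 2) ^ 2 / (4 * ρ) = (s - 1) ^ 2 / (16 * ρ) by ring]
  ring

theorem cexp_sub_one_sq_div_eq_cexp_sq_div_iff {c : ℂ} (hc : c ≠ 0) (s : ℂ) :
    cexp ((s - 1) ^ 2 / c) = cexp (s ^ 2 / c) ↔ ∃ k : ℤ, s = 1 / 2 + c * π * I * k := by
  have hn (n : ℤ) : (s - 1) ^ 2 / c = s ^ 2 / c + n * (2 * π * I) ↔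
      s = 1 / 2 + c * π * I * ((-n : ℤ) : ℂ) := by
    rw [div_add' _ _ _ hc, div_left_inj' hc]
    push_cast
    constructor <;> intro h
    · linear_combination (-1 / 2 : ℂ) * h
    · linear_combination (-2 : ℂ) * h
  rw [Complex.exp_eq_exp_iff_exists_int]
  exact ⟨fun ⟨n, h⟩ => ⟨-n, (hn n).1 h⟩, fun ⟨k, h⟩ => ⟨-k, (hn (-k)).2 (by rwa [neg_neg])⟩⟩

theorem stmt3 (ρ : ℝ) (hρ : 0 < ρ) (s : ℂ) :
    Xi ρ s - Xi ρ (1 - s) = 0 ↔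
      ∃ k : ℤ, s = 1/2 + 16 * (ρ : ℂ) * (Real.pi : ℂ) * Complex.I * (k : ℂ) := by
  have hρ' : (ρ : ℂ) ≠ 0 := ofReal_ne_zero.2 hρ.ne'
  have hsqrt : ((π : ℂ) / ρ) ^ (1 / 2 : ℂ) ≠ 0 := by
    simp [pi_ne_zero, hρ']
  rw [Xi_sub_Xi_one_sub hρ, div_eq_zero_iff, mul_eq_zero, sub_eq_zero]
  simp only [hsqrt, false_or, two_ne_zero, or_false]
  exact cexp_sub_one_sq_div_eq_cexp_sq_div_iff (mul_ne_zero (by norm_num) hρ') s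
end

section
/- For ρ > 0 and s ∈ ℂ, the 'symmetrized kernel' identity holds: ∫_{1/2}^{s} sinh((s-t)/(16ρ)) · e^{(-t²+t)/(16ρ)} · M[(Δ₄Ψ)e^{-ρlog²}](t/2) dt = ∫_{1/2}^{1-s} sinh((1-s-t)/(16ρ)) · e^{(-t²+t)/(16ρ)} · M[(Δ₄Ψ)e^{-ρlog²}](t/2) dt; i.e. the function s ↦ ∫_{1/2}^{s} sinh((s-t)/(16ρ)) e^{(-t²+t)/(16ρ)} M[(Δ₄Ψ)e^{-ρlog²}](t/2) dt is invariant under s → 1-s. -/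
open MeasureTheory Real Filter

noncomputable def MD4 (ρ : ℝ) (σ : ℂ) : ℂ :=
  ∫ t in Set.Ioi (0:ℝ), (t : ℂ) ^ (σ - 1) *
    ((8 * (2 * t ^ 2 * deriv (deriv Psi) t + 3 * t * deriv Psi t) : ℝ) : ℂ) *
    (Real.exp (-ρ * Real.log t ^ 2) : ℂ)

/-- `∫_{1/2}^s sinh((s-t)/(16ρ)) e^{(-t²+t)/(16ρ)} M[(Δ₄Ψ)e^{-ρlog²}](t/2) dt`
along the straight path from `1/2` to `s`. -/
noncomputable def Ifun (ρ : ℝ) (s : ℂ) : ℂ :=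
  ∫ u in (0:ℝ)..1, (s - 1/2) *
    (Complex.sinh ((s - (1/2 + u * (s - 1/2))) / (16 * (ρ : ℂ))) *
      Complex.exp ((-(1/2 + u * (s - 1/2)) ^ 2 + (1/2 + u * (s - 1/2))) / (16 * (ρ : ℂ))) *
      MD4 ρ ((1/2 + u * (s - 1/2)) / 2))

/-!
The real theta function `θ(t) = 1 + 2Ψ(t)` is Mathlib's `cosKernel 0`, and satisfies
`θ(1/t) = √t θ(t)`. Differentiating this twice shows that `Δ₄` preserves the symmetry:
`(Δ₄Ψ)(1/t) = √t (Δ₄Ψ)(t)` (the constant in `θ` is killed by `Δ₄`). Since `log² t` is also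
invariant under `t ↦ 1/t`, the substitution `t ↦ 1/t` in the Mellin integral gives
`M(σ) = M(1/2 - σ)`. The integrands defining `Ifun ρ s` and `Ifun ρ (1 - s)` then agree
pointwise: the path to `1 - s` is the reflection `z ↦ 1 - z` of the path to `s`, the Gaussian
factor is invariant, and the two sign changes (of `sinh` and of the path velocity) cancel.
-/

open Set Topology

noncomputable def delta4 (f : ℝ → ℝ) (t : ℝ) : ℝ :=
  8 * (2 * t ^ 2 * deriv (deriv f) t + 3 * t * deriv f t)

theorem deriv_inv_eq_of_inv_eq_sqrt_mul {f : ℝ → ℝ} (hf : DifferentiableOn ℝ f (Ioi 0))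
    (hfe : ∀ t > 0, f t⁻¹ = √t * f t) {t : ℝ} (ht : 0 < t) :
    deriv f t⁻¹ = -(t * √t / 2) * f t - t ^ 2 * √t * deriv f t := by
  have hL : HasDerivAt (fun u => f u⁻¹) (deriv f t⁻¹ * -(t ^ 2)⁻¹) t :=
    (hf.differentiableAt (Ioi_mem_nhds (inv_pos.2 ht))).hasDerivAt.comp t (hasDerivAt_inv ht.ne')
  have hR : HasDerivAt (fun u => √u * f u) (1 / (2 * √t) * f t + √t * deriv f t) t :=
    (hasDerivAt_sqrt ht.ne').mul (hf.differentiableAt (Ioi_mem_nhds ht)).hasDerivAt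
  have h := hL.unique (hR.congr_of_eventuallyEq (eventually_of_mem (Ioi_mem_nhds ht) hfe))
  obtain ⟨r, hr, rfl⟩ : ∃ r, 0 < r ∧ t = r ^ 2 := ⟨√t, sqrt_pos.2 ht, (sq_sqrt ht.le).symm⟩
  rw [sqrt_sq hr.le] at h ⊢
  field_simp at h ⊢
  linear_combination -h

theorem deriv_deriv_inv_eq_of_inv_eq_sqrt_mul {f : ℝ → ℝ} (hf : ContDiffOn ℝ 2 f (Ioi 0))
    (hfe : ∀ t > 0, f t⁻¹ = √t * f t) {t : ℝ} (ht : 0 < t) :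
    deriv (deriv f) t⁻¹ =
      t ^ 2 * (3 / 4 * √t * f t + 3 * t * √t * deriv f t + t ^ 2 * √t * deriv (deriv f) t) := by
  have hf1 : DifferentiableOn ℝ f (Ioi 0) := hf.differentiableOn (by norm_num)
  have hf2 : DifferentiableOn ℝ (deriv f) (Ioi 0) :=
    ((contDiffOn_succ_iff_deriv_of_isOpen (n := 1) isOpen_Ioi).1 hf).2.2.differentiableOn
      (by norm_num)
  have hL : HasDerivAt (fun u => deriv f u⁻¹) (deriv (deriv f) t⁻¹ * -(t ^ 2)⁻¹) t :=
    (hf2.differentiableAt (Ioi_mem_nhds (inv_pos.2 ht))).hasDerivAt.comp t (hasDerivAt_inv ht.ne')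
  have hsq := hasDerivAt_sqrt ht.ne'
  have hR := (((hasDerivAt_id t).mul hsq).div_const 2).neg.mul
      (hf1.differentiableAt (Ioi_mem_nhds ht)).hasDerivAt |>.sub
    ((((hasDerivAt_id t).pow 2).mul hsq).mul (hf2.differentiableAt (Ioi_mem_nhds ht)).hasDerivAt)
  have h := hL.unique (hR.congr_of_eventuallyEq (eventually_of_mem (Ioi_mem_nhds ht)
    fun u hu => deriv_inv_eq_of_inv_eq_sqrt_mul hf1 hfe hu))
  obtain ⟨r, hr, rfl⟩ : ∃ r, 0 < r ∧ t = r ^ 2 := ⟨√t, sqrt_pos.2 ht, (sq_sqrt ht.le).symm⟩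
  simp only [sqrt_sq hr.le, id, Pi.mul_apply, Pi.neg_apply, Pi.pow_apply, Nat.cast_ofNat,
    Nat.reduceSub, pow_one] at h ⊢
  field_simp at h ⊢
  linear_combination -h

theorem delta4_inv_of_inv_eq_sqrt_mul {f : ℝ → ℝ} (hf : ContDiffOn ℝ 2 f (Ioi 0))
    (hfe : ∀ t > 0, f t⁻¹ = √t * f t) {t : ℝ} (ht : 0 < t) :
    delta4 f t⁻¹ = √t * delta4 f t := by
  rw [delta4, delta4, deriv_deriv_inv_eq_of_inv_eq_sqrt_mul hf hfe ht,
    deriv_inv_eq_of_inv_eq_sqrt_mul (hf.differentiableOn (by norm_num)) hfe ht]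
  field_simp
  ring

open HurwitzZeta in
theorem cosKernel_zero_eq_one_add_two_mul_Psi {t : ℝ} (ht : 0 < t) :
    cosKernel 0 t = 1 + 2 * Psi t := by
  have h := (hasSum_nat_cosKernel₀ 0 ht).tsum_eq
  simp only [mul_zero, zero_mul, Real.cos_zero, mul_one, tsum_mul_left] at h
  rw [Psi]
  push_cast at h
  linarith

open HurwitzZeta in
theorem cosKernel_zero_inv {t : ℝ} (ht : 0 < t) : cosKernel 0 t⁻¹ = √t * cosKernel 0 t := by
  have h := evenKernel_functional_equation 0 t⁻¹
  rw [evenKernel_eq_cosKernel_of_zero] at h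
  simp only [h, one_div, inv_rpow ht.le, inv_inv, sqrt_eq_rpow]

open HurwitzZeta in
theorem contDiffOn_cosKernel_zero : ContDiffOn ℝ 2 (cosKernel 0) (Ioi 0) := by
  have h : ∀ t ∈ Ioi (0 : ℝ), cosKernel 0 t = (jacobiTheta₂ 0 (Complex.I * t)).re := by
    intro t _
    rw [← QuotientAddGroup.mk_zero, ← Complex.ofReal_zero, ← cosKernel_def, Complex.ofReal_re]
  refine ContDiffOn.congr (fun t ht => ContDiffAt.contDiffWithinAt ?_) h
  have hθ : ContDiffAt ℂ 2 (jacobiTheta₂ 0) (Complex.I * t) := by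
    have hU : IsOpen {τ : ℂ | 0 < τ.im} := isOpen_lt continuous_const Complex.continuous_im
    refine (DifferentiableOn.contDiffOn (fun τ hτ => ?_) hU).contDiffAt (hU.mem_nhds ?_)
    · exact (differentiableAt_jacobiTheta₂_snd 0 hτ).differentiableWithinAt
    · simpa using (ht : 0 < t)
  exact Complex.reCLM.contDiff.contDiffAt.comp t <| (hθ.restrict_scalars ℝ).comp t
    (contDiff_const.mul Complex.ofRealCLM.contDiff).contDiffAt

open HurwitzZeta in
theorem delta4_Psi {t : ℝ} (ht : 0 < t) : delta4 Psi t = delta4 (cosKernel 0) t / 2 := by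
  have h : Psi =ᶠ[𝓝 t] fun u => (cosKernel 0 u - 1) / 2 :=
    eventually_of_mem (Ioi_mem_nhds ht) fun u (hu : 0 < u) => by
      simp only [cosKernel_zero_eq_one_add_two_mul_Psi hu]; ring
  have h' : deriv Psi =ᶠ[𝓝 t] fun u => deriv (cosKernel 0) u / 2 :=
    h.deriv.mono fun u hu => by rw [hu, deriv_div_const, deriv_sub_const]
  rw [delta4, delta4, h'.deriv_eq, h.deriv_eq, deriv_div_const, deriv_div_const, deriv_sub_const]
  ring

theorem delta4_Psi_inv {t : ℝ} (ht : 0 < t) : delta4 Psi t⁻¹ = √t * delta4 Psi t := by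
  rw [delta4_Psi ht, delta4_Psi (inv_pos.2 ht), delta4_inv_of_inv_eq_sqrt_mul
    contDiffOn_cosKernel_zero (fun _ => cosKernel_zero_inv) ht, mul_div_assoc]

theorem mellin_eq_mellin_sub_of_comp_inv {E : Type*} [NormedAddCommGroup E] [NormedSpace ℂ E]
    {f : ℝ → E} {a : ℂ} (hf : ∀ t > 0, f t⁻¹ = (t : ℂ) ^ a • f t) (s : ℂ) :
    mellin f s = mellin f (a - s) := by
  calc mellin f s = mellin (fun t => (t : ℂ) ^ (-a) • f t⁻¹) s := by
        refine setIntegral_congr_fun measurableSet_Ioi fun t (ht : 0 < t) => ?_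
        dsimp only
        rw [hf t ht, smul_smul ((t : ℂ) ^ (-a)),
          ← Complex.cpow_add _ _ (Complex.ofReal_ne_zero.2 ht.ne'), neg_add_cancel,
          Complex.cpow_zero, one_smul]
    _ = mellin f (a - s) := by
        rw [mellin_cpow_smul, mellin_comp_inv, neg_add, neg_neg, add_comm, sub_eq_add_neg]

theorem MD4_eq_mellin (ρ : ℝ) (σ : ℂ) :
    MD4 ρ σ = mellin (fun t => (delta4 Psi t : ℂ) * rexp (-ρ * log t ^ 2)) σ := by
  simp only [MD4, mellin, delta4, smul_eq_mul, mul_assoc]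

theorem MD4_one_half_sub (ρ : ℝ) (σ : ℂ) : MD4 ρ (1 / 2 - σ) = MD4 ρ σ := by
  rw [MD4_eq_mellin, ← mellin_eq_mellin_sub_of_comp_inv (fun t ht => ?_) σ, ← MD4_eq_mellin]
  rw [delta4_Psi_inv ht, log_inv, neg_sq, smul_eq_mul, sqrt_eq_rpow, Complex.ofReal_mul,
    Complex.ofReal_cpow ht.le]
  push_cast
  ring

theorem stmt17_general (ρ : ℝ) (s : ℂ) : Ifun ρ s = Ifun ρ (1 - s) := by
  refine intervalIntegral.integral_congr fun u _ => ?_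
  set z : ℂ := 1 / 2 + u * (s - 1 / 2)
  have hz : (1 / 2 : ℂ) + u * (1 - s - 1 / 2) = 1 - z := by ring
  simp only [hz]
  rw [show (1 - z) / 2 = 1 / 2 - z / 2 by ring, MD4_one_half_sub,
    show (1 - s - (1 - z)) / (16 * (ρ : ℂ)) = -((s - z) / (16 * ρ)) by ring, Complex.sinh_neg,
    show -(1 - z) ^ 2 + (1 - z) = -z ^ 2 + z by ring]
  ring

theorem stmt17 (ρ : ℝ) (hρ : 0 < ρ) (s : ℂ) : Ifun ρ s = Ifun ρ (1 - s) :=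
  stmt17_general ρ s
end
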